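/- For d ≥ 2, the set {p ∈ Λ_d : p/n ∈ Λ_d for all positive integers n} is empty, where Λ_d = {j/2 : j = 1,…,d−2} ∪ [(d−1)/2, ∞). -/
import Mathlib


theorem gindikin_no_infinitely_divisible (d : ℕ) (hd : 2 ≤ d) :
    {p ∈ ({x : ℝ | ∃ j : ℕ, 1 ≤ j ∧ j ≤ d - 2 ∧ x = (j : ℝ) / 2}
        ∪ Set.Ici (((d : ℝ) - 1) / 2)) |
      ∀ n : ℕ, 0 < n →
        p / n ∈ ({x : ℝ | ∃ j : ℕ, 1 ≤ j ∧ j ≤ d - 2 ∧ x = (j : ℝ) / 2}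
          ∪ Set.Ici (((d : ℝ) - 1) / 2))} = ∅ := by
  ext p
  simp only [Set.mem_setOf_eq, Set.mem_empty_iff_false, iff_false, not_and]
  intro hp h
  have key : ∀ x : ℝ, x ∈ ({x : ℝ | ∃ j : ℕ, 1 ≤ j ∧ j ≤ d - 2 ∧ x = (j : ℝ) / 2}
      ∪ Set.Ici (((d : ℝ) - 1) / 2)) → (1 : ℝ) / 2 ≤ x := by
    rintro x (⟨j, hj1, _, rfl⟩ | hx)
    · have : (1 : ℝ) ≤ j := by exact_mod_cast hj1
      linarith
    · have hd' : (2 : ℝ) ≤ d := by exact_mod_cast hd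
      have hx' : ((d : ℝ) - 1) / 2 ≤ x := hx
      linarith
  have hp2 := key p hp
  set n : ℕ := ⌈2 * p⌉₊ + 1 with hn
  have hnpos : 0 < n := Nat.succ_pos _
  have h2 := key _ (h n hnpos)
  have hle : 2 * p ≤ (⌈2 * p⌉₊ : ℝ) := Nat.le_ceil _
  have hncast : ((⌈2 * p⌉₊ : ℝ) + 1) = (n : ℝ) := by push_cast [hn]; ring
  have hnR : (0 : ℝ) < n := by exact_mod_cast hnpos
  have := (le_div_iff₀ hnR).mp h2
  linarith
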